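/- Fix integers n, k ≥ 1, points x_{i,j} ∈ X and real numbers α_i for i ∈ [n], j ∈ [k], and any f : X → ℝ. Define L̂_SQ(f) = (1/n)·Σ_{i=1}^n k·((1/k)·Σ_{j=1}^k f(x_{i,j}) − α_i)², Êf = (1/(nk))·Σ_{i,j} f(x_{i,j}), p̂ = (1/n)·Σ_{i=1}^n α_i, B̂(f) = (k−1)·(Êf − p̂)², and L̂_DSQ(f) = L̂_SQ(f) − B̂(f). Then: (1) B̂(f) ≤ ((k−1)/k)·L̂_SQ(f); (2) L̂_DSQ(f) ≥ 0; (3) L̂_SQ(f) ≤ k·L̂_DSQ(f). -/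
import Mathlib


open MeasureTheory Finset
open scoped ENNReal NNReal

noncomputable section

namespace LLP

/-- Real value of a Boolean label/prediction (`0` or `1`). -/
def bval (b : Bool) : ℝ := if b then 1 else 0

/-- Label proportion `α` of a bag of `k` labeled examples. -/
def labelProp {X : Type*} {k : ℕ} (bag : Fin k → X × Bool) : ℝ :=
  (∑ j, bval (bag j).2) / (k : ℝ)

/-- Average prediction `(1/k)·Σ_j f(x_j)` of `f` on a bag. -/
def predProp {X : Type*} {k : ℕ} (f : X → Bool) (bag : Fin k → X × Bool) : ℝ :=
  (∑ j, bval (f (bag j).1)) / (k : ℝ)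

/-- Instance-level classification loss `L(f) = Pr_{(x,y)∼D}[f(x) ≠ y]`. -/
def err {X : Type*} [MeasurableSpace X] (D : Measure (X × Bool)) (f : X → Bool) : ℝ :=
  (D {p | f p.1 ≠ p.2}).toReal

/-- `S` is shattered by the Boolean-valued class `F`. -/
def Shatters {Z : Type*} (F : Set (Z → Bool)) (S : Finset Z) : Prop :=
  ∀ T ⊆ S, ∃ f ∈ F, ∀ z ∈ S, (f z = true ↔ z ∈ T)

/-- The VC dimension of `F` is at most `d`. -/
def VCDimLE {Z : Type*} (F : Set (Z → Bool)) (d : ℕ) : Prop :=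
  ∀ S : Finset Z, Shatters F S → S.card ≤ d

/-- Joint distribution of `n` i.i.d. bags, each consisting of `k` i.i.d. draws from `D`. -/
def bagMeasure {X : Type*} [MeasurableSpace X] (D : Measure (X × Bool)) (n k : ℕ) :
    Measure (Fin n → Fin k → X × Bool) :=
  Measure.pi fun _ => Measure.pi fun _ => D

/-- Empirical proportional (0-1) risk: fraction of bags whose predicted proportion
mismatches the observed label proportion. -/
def empPM {X : Type*} {n k : ℕ} (f : X → Bool) (ω : Fin n → Fin k → X × Bool) : ℝ :=
  (∑ i, if predProp f (ω i) = labelProp (ω i) then (0 : ℝ) else 1) / (n : ℝ)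

/-- Empirical proportional square loss. -/
def empSQ {X : Type*} {n k : ℕ} (f : X → Bool) (ω : Fin n → Fin k → X × Bool) : ℝ :=
  (∑ i, (predProp f (ω i) - labelProp (ω i)) ^ 2) / (n : ℝ)

/-- The EasyLLP estimate of the 0-1 loss on a single bag, using marginal label
proportion `p`. -/
def ellEZ {X : Type*} {k : ℕ} (p : ℝ) (f : X → Bool) (bag : Fin k → X × Bool) : ℝ :=
  ((k : ℝ) * (labelProp bag - p) + p) * (1 - predProp f bag)
    + ((k : ℝ) * (p - labelProp bag) + (1 - p)) * predProp f bag

/-- Marginal label proportion `p = Pr[y = 1]`. -/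
def labelP {X : Type*} [MeasurableSpace X] (D : Measure (X × Bool)) : ℝ :=
  (D {q | q.2 = true}).toReal

end LLP

namespace LLP

/-- Lemma 2, elementary relations between the empirical proportional
square loss, the empirical debiasing term, and the debiased square loss.
For any data `{x_{i,j}, α_i}` and any `f : X → ℝ`:
(1) `B̂(f) ≤ ((k−1)/k)·L̂_SQ(f)`; (2) `L̂_DSQ(f) ≥ 0`; (3) `L̂_SQ(f) ≤ k·L̂_DSQ(f)`. -/
theorem empirical_debiased_square_relations
    (X : Type*) (n k : ℕ) (hn : 1 ≤ n) (hk : 1 ≤ k)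
    (x : Fin n → Fin k → X) (α : Fin n → ℝ) (f : X → ℝ) :
    (((k : ℝ) - 1) *
          ((∑ i, ∑ j, f (x i j)) / ((n : ℝ) * (k : ℝ)) - (∑ i, α i) / (n : ℝ)) ^ 2 ≤
        (((k : ℝ) - 1) / (k : ℝ)) *
          ((∑ i, (k : ℝ) * ((∑ j, f (x i j)) / (k : ℝ) - α i) ^ 2) / (n : ℝ))) ∧
      (0 ≤
        (∑ i, (k : ℝ) * ((∑ j, f (x i j)) / (k : ℝ) - α i) ^ 2) / (n : ℝ) -
          ((k : ℝ) - 1) *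
            ((∑ i, ∑ j, f (x i j)) / ((n : ℝ) * (k : ℝ)) - (∑ i, α i) / (n : ℝ)) ^ 2) ∧
      ((∑ i, (k : ℝ) * ((∑ j, f (x i j)) / (k : ℝ) - α i) ^ 2) / (n : ℝ) ≤
        (k : ℝ) *
          ((∑ i, (k : ℝ) * ((∑ j, f (x i j)) / (k : ℝ) - α i) ^ 2) / (n : ℝ) -
            ((k : ℝ) - 1) *
              ((∑ i, ∑ j, f (x i j)) / ((n : ℝ) * (k : ℝ)) - (∑ i, α i) / (n : ℝ)) ^ 2)) := by
  have hk0 : (0:ℝ) < k := by exact_mod_cast hk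
  have hn0 : (0:ℝ) < n := by exact_mod_cast hn
  set A : Fin n → ℝ := fun i => (∑ j, f (x i j)) / k - α i with hA
  have hE : (∑ i, ∑ j, f (x i j)) / ((n:ℝ)*k) - (∑ i, α i)/n = (∑ i, A i)/n := by
    have h1 : ∑ i, A i = (∑ i, ∑ j, f (x i j))/k - ∑ i, α i := by
      simp [hA, Finset.sum_sub_distrib, Finset.sum_div]
    rw [h1, sub_div, div_div, mul_comm (k:ℝ)]
  have hS : (∑ i, (k:ℝ) * ((∑ j, f (x i j))/k - α i)^2)/n = (k:ℝ) * ((∑ i, A i^2)/n) := by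
    rw [← Finset.mul_sum, mul_div_assoc]
  have cs : ((∑ i, A i)/n)^2 ≤ (∑ i, A i^2)/n := by
    have h := sq_sum_le_card_mul_sum_sq (s := (Finset.univ : Finset (Fin n))) (f := A)
    simp only [Finset.card_univ, Fintype.card_fin] at h
    rw [div_pow, div_le_div_iff₀ (by positivity) hn0]
    calc (∑ i, A i)^2 * n ≤ ((n:ℝ) * ∑ i, A i^2) * n := by
          exact mul_le_mul_of_nonneg_right (by exact_mod_cast h) hn0.le
      _ = (∑ i, A i^2) * n^2 := by ring
  have hk1 : (0:ℝ) ≤ (k:ℝ) - 1 := by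
    have : (1:ℝ) ≤ k := by exact_mod_cast hk
    linarith
  have key : ((k:ℝ) - 1) * ((∑ i, A i)/n)^2 ≤ ((k:ℝ) - 1) * ((∑ i, A i^2)/n) :=
    mul_le_mul_of_nonneg_left cs hk1
  have hsq : (0:ℝ) ≤ (∑ i, A i^2)/n := by positivity
  rw [hE, hS]
  refine ⟨?_, ?_, ?_⟩
  · calc ((k:ℝ) - 1) * ((∑ i, A i)/n)^2 ≤ ((k:ℝ) - 1) * ((∑ i, A i^2)/n) := key
      _ = (((k:ℝ) - 1)/k) * ((k:ℝ) * ((∑ i, A i^2)/n)) := by field_simp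
  · nlinarith
  · nlinarith

end LLP
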